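/- arXiv:2202.12022 — 6 statements merged into one kernel-verified Lean document; each statement's English description precedes it below -/
import Mathlib

section
/- Let λ be a strict partition and T a standard Young composition tableau of shape λ (filling of the left-justified diagram D(λ)). Then the entries of T increase from bottom to top in every column of T. -/
/-- A composition: a list of positive integers. -/
def IsComposition (α : List ℕ) : Prop := ∀ x ∈ α, 0 < x

/-- A peak composition: all parts except possibly the last exceed 1. -/
def IsPeakComposition (α : List ℕ) : Prop :=
  IsComposition α ∧ ∀ i, i + 1 < α.length → 1 < α.getD i 0

/-- A strict partition: a strictly decreasing list of positive integers. -/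
def IsStrictPartition (l : List ℕ) : Prop :=
  (∀ x ∈ l, 0 < x) ∧ l.Chain' (· > ·)

/-- Box b = (column, row) (both indexed from 1) belongs to the left-justified diagram
of the composition α (row i has α_i boxes; rows numbered from bottom). -/
def InCompDiag (α : List ℕ) (b : ℕ × ℕ) : Prop :=
  1 ≤ b.2 ∧ b.2 ≤ α.length ∧ 1 ≤ b.1 ∧ b.1 ≤ α.getD (b.2 - 1) 0

/-- Box b = (column, row) belongs to the shifted diagram of l: row i is shifted i-1
units rightwards. -/
def InShiftedDiag (l : List ℕ) (b : ℕ × ℕ) : Prop :=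
  1 ≤ b.2 ∧ b.2 ≤ l.length ∧ b.2 ≤ b.1 ∧ b.1 < b.2 + l.getD (b.2 - 1) 0

/-- A standard filling of the diagram D with n boxes: a bijective assignment of
1, ..., n to the boxes of D. -/
def IsStdFilling (D : ℕ × ℕ → Prop) (n : ℕ) (T : ℕ × ℕ → ℕ) : Prop :=
  (∀ b, D b → 1 ≤ T b ∧ T b ≤ n) ∧
  (∀ k, 1 ≤ k → k ≤ n → ∃ b, D b ∧ T b = k) ∧
  (∀ b b', D b → D b' → T b = T b' → b = b')

/-- A standard Young composition tableau of shape α: rows increase left to right,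
the first column increases bottom to top, and the triple condition (SYCT3) holds. -/
def IsSYCT (α : List ℕ) (n : ℕ) (T : ℕ × ℕ → ℕ) : Prop :=
  IsStdFilling (InCompDiag α) n T ∧
  (∀ c c' r, c < c' → InCompDiag α (c, r) → InCompDiag α (c', r) → T (c, r) < T (c', r)) ∧
  (∀ r r', r < r' → InCompDiag α (1, r) → InCompDiag α (1, r') → T (1, r) < T (1, r')) ∧
  (∀ c r r', r' < r → InCompDiag α (c, r) → InCompDiag α (c + 1, r') →
      T (c, r) < T (c + 1, r') →
      InCompDiag α (c + 1, r) ∧ T (c + 1, r) < T (c + 1, r'))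

/-- For every 1 ≤ k ≤ n, the boxes of the diagram of α with entries at most k form the
diagram of a peak composition. -/
def PrefixesArePeak (α : List ℕ) (n : ℕ) (T : ℕ × ℕ → ℕ) : Prop :=
  ∀ k, 1 ≤ k → k ≤ n → ∃ β : List ℕ, IsPeakComposition β ∧
    ∀ b, (InCompDiag α b ∧ T b ≤ k) ↔ InCompDiag β b

/-- A standard peak Young composition tableau. -/
def IsSPYCT (α : List ℕ) (n : ℕ) (T : ℕ × ℕ → ℕ) : Prop :=
  IsSYCT α n T ∧ PrefixesArePeak α n T

/-- A standard peak composition tableau (SPCT1, SPCT2, SPCT3). -/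
def IsSPCT (α : List ℕ) (n : ℕ) (T : ℕ × ℕ → ℕ) : Prop :=
  IsStdFilling (InCompDiag α) n T ∧
  (∀ c c' r, c < c' → InCompDiag α (c, r) → InCompDiag α (c', r) → T (c, r) < T (c', r)) ∧
  (∀ r r', r < r' → InCompDiag α (1, r) → InCompDiag α (1, r') → T (1, r) < T (1, r')) ∧
  PrefixesArePeak α n T

/-- A standard shifted tableau: rows increase left to right and columns increase
bottom to top. -/
def IsSShT (l : List ℕ) (n : ℕ) (T : ℕ × ℕ → ℕ) : Prop :=
  IsStdFilling (InShiftedDiag l) n T ∧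
  (∀ c c' r, c < c' → InShiftedDiag l (c, r) → InShiftedDiag l (c', r) →
      T (c, r) < T (c', r)) ∧
  (∀ c r r', r < r' → InShiftedDiag l (c, r) → InShiftedDiag l (c, r') →
      T (c, r) < T (c, r'))

/-- Rectification: shift each box of row r by r-1 units leftwards. -/
def rect (S : ℕ × ℕ → ℕ) : ℕ × ℕ → ℕ := fun b => S (b.1 + b.2 - 1, b.2)

/-- The filling obtained by exchanging the entries i and i+1. -/
def swapFill (T : ℕ × ℕ → ℕ) (i : ℕ) : ℕ × ℕ → ℕ :=
  fun b => if T b = i then i + 1 else if T b = i + 1 then i else T b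

/-- i is a descent of a filling of the diagram of α (for the Young composition tableau
convention): i+1 lies in a column weakly left of the column of i. -/
def IsDes (α : List ℕ) (T : ℕ × ℕ → ℕ) (i : ℕ) : Prop :=
  ∃ b b', InCompDiag α b ∧ InCompDiag α b' ∧ T b = i ∧ T b' = i + 1 ∧ b'.1 ≤ b.1

/-!
If row `r + 1` is strictly shorter than row `r`, (SYCT3) forces `T (c + 1, r) < T (c, r + 1)`:
a violation at column `c` yields the box `(c + 1, r + 1)` with `T (c + 1, r + 1) < T (c + 1, r)`,
hence, as row `r` increases, a violation at column `c + 1`, and so on until row `r` runs out.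
Then `T (c + 1, r) < T (c, r + 1) < T (c + 1, r + 1)` gives column-strictness between adjacent
rows away from the first column, where (SYCT2) applies.
Rows are numbered from `1`, so row `r` has length `α.getD (r - 1) 0`.
-/

namespace IsSYCT

variable {α : List ℕ} {n : ℕ} {T : ℕ × ℕ → ℕ}

theorem lt_up_left (hT : IsSYCT α n T) {c r : ℕ} (hα : α.getD r 0 < α.getD (r - 1) 0)
    (hup : InCompDiag α (c, r + 1)) (hright : InCompDiag α (c + 1, r)) :
    T (c + 1, r) < T (c, r + 1) := by
  rcases lt_trichotomy (T (c + 1, r)) (T (c, r + 1)) with hlt | heq | hgt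
  · exact hlt
  · simpa using hT.1.2.2 _ _ hright hup heq
  · obtain ⟨hdiag, hdiag_lt⟩ := hT.2.2.2 c (r + 1) r (by omega) hup hright hgt
    have hnext : InCompDiag α (c + 2, r) := by
      have hc : c + 1 ≤ α.getD r 0 := hdiag.2.2.2
      exact ⟨hright.1, hright.2.1, by omega, show c + 2 ≤ α.getD (r - 1) 0 by omega⟩
    have hrec : T (c + 2, r) < T (c + 1, r + 1) := hT.lt_up_left hα hdiag hnext
    have hrowlt : T (c + 1, r) < T (c + 2, r) := hT.2.1 _ _ r (by omega) hright hnext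
    omega
termination_by α.getD (r - 1) 0 - c
decreasing_by
  have hc : c + 2 ≤ α.getD (r - 1) 0 := hnext.2.2.2
  omega

theorem lt_up (hT : IsSYCT α n T) {c r : ℕ} (hα : α.getD r 0 < α.getD (r - 1) 0)
    (hbox : InCompDiag α (c, r)) (hup : InCompDiag α (c, r + 1)) :
    T (c, r) < T (c, r + 1) := by
  obtain ⟨hr, hrlen, hc, hclen⟩ := hbox
  obtain _ | _ | c := c
  · omega
  · exact hT.2.2.1 r (r + 1) (by omega) ⟨hr, hrlen, hc, hclen⟩ hup
  · have hc' : c + 2 ≤ α.getD r 0 := hup.2.2.2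
    have hupLeft : InCompDiag α (c + 1, r + 1) :=
      ⟨hup.1, hup.2.1, by omega, show c + 1 ≤ α.getD r 0 by omega⟩
    calc T (c + 2, r) < T (c + 1, r + 1) := hT.lt_up_left hα hupLeft ⟨hr, hrlen, hc, hclen⟩
      _ < T (c + 2, r + 1) := hT.2.1 _ _ _ (by omega) hupLeft hup

end IsSYCT

namespace IsStrictPartition

variable {l : List ℕ}

theorem getD_lt_getD (hl : IsStrictPartition l) {i j : ℕ} (hij : i < j) (hj : j < l.length) :
    l.getD j 0 < l.getD i 0 := by
  rw [List.getD_eq_getElem l 0 hj, List.getD_eq_getElem l 0 (hij.trans hj)]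
  exact List.pairwise_iff_getElem.mp (List.isChain_iff_pairwise.mp hl.2) i j _ hj hij

theorem inCompDiag_of_le (hl : IsStrictPartition l) {c r r' : ℕ} (hr : 1 ≤ r) (hrr' : r ≤ r')
    (hbox : InCompDiag l (c, r')) : InCompDiag l (c, r) := by
  obtain ⟨-, hlen, hc, hclen⟩ := hbox
  refine ⟨hr, hrr'.trans hlen, hc, hclen.trans ?_⟩
  rcases (Nat.sub_le_sub_right hrr' 1).eq_or_lt with heq | hlt
  · rw [heq]
  · exact (hl.getD_lt_getD hlt (by omega)).le

end IsStrictPartition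

/-- For a strict partition shape, the entries of a standard Young composition tableau
increase from bottom to top in every column. -/
theorem syct_columns_increase (n : ℕ) (l : List ℕ) (hl : IsStrictPartition l)
    (T : ℕ × ℕ → ℕ) (hT : IsSYCT l n T) :
    ∀ c r r', r < r' → InCompDiag l (c, r) → InCompDiag l (c, r') →
      T (c, r) < T (c, r') := by
  intro c r r' hrr' hbox hbox'
  have hshape : ∀ s, r ≤ s → InCompDiag l (c, s + 1) → l.getD s 0 < l.getD (s - 1) 0 :=
    fun s hs hbox_s => hl.getD_lt_getD (by have := hbox.1; omega) hbox_s.2.1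
  induction r', hrr' using Nat.le_induction with
  | base => exact hT.lt_up (hshape r le_rfl hbox') hbox hbox'
  | succ s hs ih =>
    have hmid : InCompDiag l (c, s) :=
      hl.inCompDiag_of_le (r' := s + 1) (hbox.1.trans (by omega)) (by omega) hbox'
    exact (ih hmid).trans (hT.lt_up (hshape s (by omega) hbox') hmid hbox')
end

section
/- Let λ be a strict partition of n. The map rect, which shifts every box of row i of a shifted diagram by i-1 units leftwards (carrying entries), is a bijection from standard shifted tableaux of shape λ to standard peak Young composition tableaux of shape λ. -/
/-!
Shifting row `r` by `r - 1` boxes to the left matches the shifted diagram of a strict partition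
`λ` with its left-justified diagram, keeping rows and turning each column of the shifted diagram
into a diagonal `(c + 1, r), (c, r + 1)` of the left-justified one. So a standard shifted tableau
rectifies to a filling whose rows, first column and diagonals increase. Such a filling satisfies
the triple condition vacuously (an entry beats everything to its right in lower rows), and
each prefix `{T ≤ k}` is a peak composition diagram because `T (2, r) < T (1, r + 1)`.
Conversely the diagonals of a standard Young composition tableau of strictly decreasing shape
increase: if `T (c, r + 1) < T (c + 1, r)`, the triple condition pushes this inequality along
row `r + 1` beyond its end, as row `r` is longer. Undoing the shift therefore gives a shifted
tableau.
-/

lemma IsComposition.one_le_getD {α : List ℕ} (hα : IsComposition α) {i : ℕ}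
    (hi : i < α.length) : 1 ≤ α.getD i 0 := by
  rw [List.getD_eq_getElem α 0 hi]
  exact hα _ (List.getElem_mem hi)

lemma IsComposition.inCompDiag_one {α : List ℕ} (hα : IsComposition α) {r : ℕ} (h1 : 1 ≤ r)
    (h2 : r ≤ α.length) : InCompDiag α (1, r) :=
  ⟨h1, h2, le_rfl, hα.one_le_getD (by omega)⟩

namespace IsStrictPartition

variable {l : List ℕ}

lemma getD_add_le (hl : IsStrictPartition l) {i j : ℕ} (hij : i ≤ j) (hj : j < l.length) :
    l.getD j 0 + j ≤ l.getD i 0 + i := by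
  refine antitoneOn_of_add_one_le (f := fun i => l.getD i 0 + i) Set.ordConnected_Iio
    (fun a _ _ ha => ?_) (show i < l.length by omega) (show j < l.length by omega) hij
  have hchain := List.isChain_iff_getElem.mp hl.2 a ha
  rw [← List.getD_eq_getElem l 0 (Nat.lt_of_succ_lt ha), ← List.getD_eq_getElem l 0 ha]
    at hchain
  omega

lemma getD_lt_getD_pred (hl : IsStrictPartition l) {r : ℕ} (hr : 1 ≤ r)
    (hrl : r < l.length) : l.getD r 0 < l.getD (r - 1) 0 := by
  have := hl.getD_add_le (Nat.sub_le r 1) hrl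
  omega

lemma isPeakComposition (hl : IsStrictPartition l) : IsPeakComposition l := by
  refine ⟨hl.1, fun i hi => ?_⟩
  have := hl.getD_add_le (Nat.le_add_right i 1) hi
  have := IsComposition.one_le_getD hl.1 hi
  omega

end IsStrictPartition

/-- The box of the shifted diagram that `rect` moves to the box `b` of the left-justified one. -/
def shiftBox (b : ℕ × ℕ) : ℕ × ℕ := (b.1 + b.2 - 1, b.2)

def unshiftBox (b : ℕ × ℕ) : ℕ × ℕ := (b.1 - b.2 + 1, b.2)

lemma rect_apply (S : ℕ × ℕ → ℕ) (b : ℕ × ℕ) : rect S b = S (shiftBox b) := rfl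

lemma unshiftBox_shiftBox {b : ℕ × ℕ} (hb : 1 ≤ b.1) : unshiftBox (shiftBox b) = b := by
  obtain ⟨c, r⟩ := b
  simp only [shiftBox, unshiftBox, Prod.mk.injEq, and_true] at hb ⊢
  omega

lemma shiftBox_unshiftBox {b : ℕ × ℕ} (hb : b.2 ≤ b.1) : shiftBox (unshiftBox b) = b := by
  obtain ⟨c, r⟩ := b
  simp only [shiftBox, unshiftBox, Prod.mk.injEq, and_true] at hb ⊢
  omega

section Diagrams

variable {l : List ℕ} {c r : ℕ}

lemma inCompDiag_mk_iff :
    InCompDiag l (c, r) ↔ 1 ≤ r ∧ r ≤ l.length ∧ 1 ≤ c ∧ c ≤ l.getD (r - 1) 0 :=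
  Iff.rfl

lemma inShiftedDiag_mk_iff :
    InShiftedDiag l (c, r) ↔
      1 ≤ r ∧ r ≤ l.length ∧ r ≤ c ∧ c < r + l.getD (r - 1) 0 :=
  Iff.rfl

lemma InCompDiag.inShiftedDiag_shiftBox {b : ℕ × ℕ} (hb : InCompDiag l b) :
    InShiftedDiag l (shiftBox b) := by
  obtain ⟨_, _, _, _⟩ := hb
  refine ⟨?_, ?_, ?_, ?_⟩ <;> (dsimp only [shiftBox]; omega)

lemma InShiftedDiag.inCompDiag_unshiftBox {b : ℕ × ℕ} (hb : InShiftedDiag l b) :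
    InCompDiag l (unshiftBox b) := by
  obtain ⟨_, _, _, _⟩ := hb
  refine ⟨?_, ?_, ?_, ?_⟩ <;> (dsimp only [unshiftBox]; omega)

lemma InShiftedDiag.of_row_le (hl : IsStrictPartition l) {r' : ℕ}
    (h : InShiftedDiag l (c, r')) (hr : 1 ≤ r) (hrr' : r ≤ r') : InShiftedDiag l (c, r) := by
  rw [inShiftedDiag_mk_iff] at h ⊢
  have := hl.getD_add_le (show r - 1 ≤ r' - 1 by omega) (show r' - 1 < l.length by omega)
  omega

end Diagrams

lemma IsStdFilling.comp {D D' : ℕ × ℕ → Prop} {n : ℕ} {T : ℕ × ℕ → ℕ}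
    (hT : IsStdFilling D' n T) {φ ψ : ℕ × ℕ → ℕ × ℕ} (hφ : ∀ b, D b → D' (φ b))
    (hψ : ∀ b, D' b → D (ψ b)) (hψφ : ∀ b, D b → ψ (φ b) = b)
    (hφψ : ∀ b, D' b → φ (ψ b) = b) : IsStdFilling D n (T ∘ φ) := by
  obtain ⟨hbound, hsurj, hinj⟩ := hT
  refine ⟨fun b hb => hbound _ (hφ b hb), fun k hk1 hkn => ?_, fun b b' hb hb' he => ?_⟩
  · obtain ⟨b, hb, rfl⟩ := hsurj k hk1 hkn
    exact ⟨ψ b, hψ b hb, by rw [Function.comp_apply, hφψ b hb]⟩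
  · rw [← hψφ b hb, ← hψφ b' hb', hinj _ _ (hφ b hb) (hφ b' hb') he]

lemma exists_isComposition_inCompDiag_iff {α : List ℕ} {P : ℕ × ℕ → Prop}
    (hP : ∀ b, P b → InCompDiag α b)
    (hleft : ∀ c c' r, 1 ≤ c' → c' ≤ c → P (c, r) → P (c', r))
    (hdown : ∀ r r', 1 ≤ r' → r' ≤ r → P (1, r) → P (1, r')) :
    ∃ β, IsComposition β ∧ ∀ b, P b ↔ InCompDiag β b := by
  classical
  set R := Nat.findGreatest (fun r => P (1, r)) α.length
  set g : ℕ → ℕ := fun r => Nat.findGreatest (fun c => P (c, r)) (α.getD (r - 1) 0)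
  set β := (List.range R).map fun i => g (i + 1)
  have hlen : β.length = R := by simp [β]
  have hget : ∀ r, 1 ≤ r → r ≤ R → β.getD (r - 1) 0 = g r := by
    intro r h1 h2
    rw [List.getD_eq_getElem _ _ (by rw [hlen]; omega)]
    simp only [β, List.getElem_map, List.getElem_range]
    congr 1
    omega
  have hfirst : ∀ r, 1 ≤ r → r ≤ R → P (1, r) := fun r h1 h2 =>
    hdown R r h1 h2 (Nat.findGreatest_of_ne_zero (m := R) rfl (by omega))
  have hrow_le : ∀ c r, P (c, r) → r ≤ R := fun c r h => by
    obtain ⟨h1, h2, h3, -⟩ := hP _ h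
    exact Nat.le_findGreatest h2 (hleft c 1 r le_rfl h3 h)
  have hle_g : ∀ c r, P (c, r) → c ≤ g r := fun c r h => Nat.le_findGreatest (hP _ h).2.2.2 h
  have hg_spec : ∀ r, 1 ≤ r → r ≤ R → P (g r, r) := fun r h1 h2 =>
    Nat.findGreatest_spec (P := fun c => P (c, r)) (hP _ (hfirst r h1 h2)).2.2.2 (hfirst r h1 h2)
  refine ⟨β, fun x hx => ?_, fun ⟨c, r⟩ => ⟨fun h => ?_, ?_⟩⟩
  · obtain ⟨i, hi, rfl⟩ := List.mem_map.mp hx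
    exact hle_g 1 (i + 1) (hfirst (i + 1) (by omega) (List.mem_range.mp hi))
  · obtain ⟨h1, -, h3, -⟩ := hP _ h
    have hr := hrow_le c r h
    refine ⟨h1, ?_, h3, ?_⟩
    · rw [hlen]; exact hr
    · rw [hget r h1 hr]; exact hle_g c r h
  · rintro ⟨h1, h2, h3, h4⟩
    rw [hlen] at h2
    rw [hget r h1 h2] at h4
    exact hleft _ _ _ h3 h4 (hg_spec r h1 h2)

lemma isPeakComposition_of_inCompDiag {β : List ℕ} (hβ : IsComposition β)
    (h : ∀ r, 1 ≤ r → InCompDiag β (1, r + 1) → InCompDiag β (2, r)) :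
    IsPeakComposition β := by
  refine ⟨hβ, fun i hi => ?_⟩
  exact (h (i + 1) (by omega) (hβ.inCompDiag_one (by omega) hi)).2.2.2

lemma prefixesArePeak_of_lt {α : List ℕ} {n : ℕ} {T : ℕ × ℕ → ℕ}
    (hα : IsPeakComposition α)
    (hrow : ∀ c c' r, c < c' → InCompDiag α (c, r) → InCompDiag α (c', r) →
      T (c, r) < T (c', r))
    (hcol : ∀ r r', r < r' → InCompDiag α (1, r) → InCompDiag α (1, r') →
      T (1, r) < T (1, r'))
    (hdiag : ∀ r, InCompDiag α (2, r) → InCompDiag α (1, r + 1) → T (2, r) < T (1, r + 1)) :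
    PrefixesArePeak α n T := by
  have hrow_le : ∀ c c' r, c ≤ c' → InCompDiag α (c, r) → InCompDiag α (c', r) →
      T (c, r) ≤ T (c', r) := fun c c' r hcc' h h' => by
    rcases hcc'.lt_or_eq with hlt | rfl
    exacts [(hrow c c' r hlt h h').le, le_rfl]
  intro k _ _
  obtain ⟨β, hβ, hβiff⟩ :=
    exists_isComposition_inCompDiag_iff (P := fun b => InCompDiag α b ∧ T b ≤ k)
    (fun b h => h.1)
    (fun c c' r hc' hcc' ⟨h, hk⟩ => by
      have h' : InCompDiag α (c', r) := ⟨h.1, h.2.1, hc', hcc'.trans h.2.2.2⟩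
      exact ⟨h', (hrow_le c' c r hcc' h' h).trans hk⟩)
    (fun r r' hr' hrr' ⟨h, hk⟩ => by
      have h' : InCompDiag α (1, r') := hα.1.inCompDiag_one hr' (hrr'.trans h.2.1)
      rcases hrr'.lt_or_eq with hlt | rfl
      exacts [⟨h', (hcol r' r hlt h' h).le.trans hk⟩, ⟨h, hk⟩])
  refine ⟨β, isPeakComposition_of_inCompDiag hβ fun r hr h => ?_, hβiff⟩
  obtain ⟨h1, hk⟩ := (hβiff _).mpr h
  have hlen : r + 1 ≤ α.length := h1.2.1
  have h2 : InCompDiag α (2, r) := ⟨hr, by omega, by norm_num, hα.2 (r - 1) (by omega)⟩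
  exact (hβiff _).mp ⟨h2, (hdiag r h2 h1).le.trans hk⟩

/-- Iterating the triple condition along row `r + 1` would run past the end of that row. -/
lemma IsSYCT.lt_of_getD_lt {α : List ℕ} {n : ℕ} {T : ℕ × ℕ → ℕ} (hT : IsSYCT α n T)
    {c r : ℕ} (hr : α.getD r 0 < α.getD (r - 1) 0) (h1 : InCompDiag α (c + 1, r))
    (h2 : InCompDiag α (c, r + 1)) : T (c + 1, r) < T (c, r + 1) := by
  obtain ⟨⟨-, -, hinj⟩, hrow, -, htriple⟩ := hT
  have hne : T (c + 1, r) ≠ T (c, r + 1) := fun he => by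
    simpa using congrArg Prod.snd (hinj _ _ h1 h2 he)
  refine lt_of_le_of_ne (not_lt.mp fun hlt => ?_) hne
  have hright : ∀ d, InCompDiag α (d, r + 1) → InCompDiag α (d + 1, r) := fun d hd => by
    have := (inCompDiag_mk_iff.mp h1).1
    rw [inCompDiag_mk_iff] at hd ⊢
    simp only [Nat.add_sub_cancel] at hd
    omega
  have hstep : ∀ j, InCompDiag α (c + j, r + 1) ∧ T (c + j, r + 1) < T (c + j + 1, r) := by
    intro j
    induction j with
    | zero => exact ⟨h2, hlt⟩
    | succ j ih =>
      obtain ⟨hmem, hltj⟩ := ih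
      obtain ⟨hmem', hlt'⟩ := htriple (c + j) (r + 1) r (Nat.lt_succ_self r) hmem
        (hright _ hmem) hltj
      exact ⟨hmem',
        hlt'.trans (hrow _ _ _ (Nat.lt_succ_self _) (hright _ hmem) (hright _ hmem'))⟩
  have hend := inCompDiag_mk_iff.mp (hstep (α.getD r 0 + 1)).1
  simp only [Nat.add_sub_cancel] at hend
  omega

namespace IsSShT

variable {l : List ℕ} {n : ℕ} {S : ℕ × ℕ → ℕ}

lemma le_of_le_col (hS : IsSShT l n S) {c c' r : ℕ} (hcc' : c ≤ c') (h : InShiftedDiag l (c, r))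
    (h' : InShiftedDiag l (c', r)) : S (c, r) ≤ S (c', r) := by
  rcases hcc'.lt_or_eq with hlt | rfl
  exacts [(hS.2.1 c c' r hlt h h').le, le_rfl]

lemma rect_lt_of_lt_col (hS : IsSShT l n S) {c c' r : ℕ} (hcc' : c < c') (h : InCompDiag l (c, r))
    (h' : InCompDiag l (c', r)) : rect S (c, r) < rect S (c', r) :=
  hS.2.1 _ _ r (by have := (inCompDiag_mk_iff.mp h).2.2.1; omega)
    h.inShiftedDiag_shiftBox h'.inShiftedDiag_shiftBox

lemma rect_one_lt (hl : IsStrictPartition l) (hS : IsSShT l n S) {r r' : ℕ} (hrr' : r < r')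
    (h : InCompDiag l (1, r)) (h' : InCompDiag l (1, r')) : rect S (1, r) < rect S (1, r') := by
  have hr : InShiftedDiag l (r, r) := by simpa [shiftBox] using h.inShiftedDiag_shiftBox
  have hr' : InShiftedDiag l (r', r') := by simpa [shiftBox] using h'.inShiftedDiag_shiftBox
  have hmid : InShiftedDiag l (r', r) := hr'.of_row_le hl (inCompDiag_mk_iff.mp h).1 hrr'.le
  simpa [rect_apply, shiftBox] using (hS.2.1 _ _ _ hrr' hr hmid).trans (hS.2.2 _ _ _ hrr' hmid hr')

lemma rect_succ_le (hl : IsStrictPartition l) (hS : IsSShT l n S) {c r r' : ℕ} (hr'r : r' < r)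
    (h : InCompDiag l (c, r)) (h' : InCompDiag l (c + 1, r')) :
    rect S (c + 1, r') ≤ rect S (c, r) := by
  have hcr : InShiftedDiag l (c + r - 1, r) := h.inShiftedDiag_shiftBox
  have hmid : InShiftedDiag l (c + r - 1, r') :=
    hcr.of_row_le hl (inCompDiag_mk_iff.mp h').1 hr'r.le
  have hle : c + 1 + r' - 1 ≤ c + r - 1 := by omega
  exact (hS.le_of_le_col hle h'.inShiftedDiag_shiftBox hmid).trans (hS.2.2 _ _ _ hr'r hmid hcr).le

lemma rect_two_lt (hS : IsSShT l n S) {r : ℕ} (h : InCompDiag l (2, r))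
    (h' : InCompDiag l (1, r + 1)) : rect S (2, r) < rect S (1, r + 1) := by
  have hlow : InShiftedDiag l (r + 1, r) := by
    simpa [shiftBox, add_comm] using h.inShiftedDiag_shiftBox
  have hup : InShiftedDiag l (r + 1, r + 1) := by simpa [shiftBox] using h'.inShiftedDiag_shiftBox
  simpa [rect_apply, shiftBox, add_comm] using hS.2.2 _ _ _ (Nat.lt_succ_self r) hlow hup

lemma isSPYCT_rect (hl : IsStrictPartition l) (hS : IsSShT l n S) : IsSPYCT l n (rect S) := by
  have hstd := hS.1.comp (φ := shiftBox) (ψ := unshiftBox)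
    (fun _ => InCompDiag.inShiftedDiag_shiftBox) (fun _ => InShiftedDiag.inCompDiag_unshiftBox)
    (fun b hb => unshiftBox_shiftBox hb.2.2.1) (fun b hb => shiftBox_unshiftBox hb.2.2.1)
  refine ⟨⟨hstd, fun c c' r => hS.rect_lt_of_lt_col, fun r r' => hS.rect_one_lt hl,
    fun c r r' hr'r h h' hlt => absurd hlt (not_lt_of_ge (hS.rect_succ_le hl hr'r h h'))⟩,
    prefixesArePeak_of_lt hl.isPeakComposition (fun c c' r => hS.rect_lt_of_lt_col)
      (fun r r' => hS.rect_one_lt hl) (fun r => hS.rect_two_lt)⟩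

end IsSShT

lemma IsSYCT.isSShT_comp_unshiftBox {l : List ℕ} {n : ℕ} {T : ℕ × ℕ → ℕ}
    (hl : IsStrictPartition l) (hT : IsSYCT l n T) : IsSShT l n (T ∘ unshiftBox) := by
  have hstd := hT.1.comp (φ := unshiftBox) (ψ := shiftBox)
    (fun _ => InShiftedDiag.inCompDiag_unshiftBox) (fun _ => InCompDiag.inShiftedDiag_shiftBox)
    (fun b hb => shiftBox_unshiftBox hb.2.2.1) (fun b hb => unshiftBox_shiftBox hb.2.2.1)
  refine ⟨hstd, fun c c' r hcc' h h' => ?_, fun c r r' hrr' h h' => ?_⟩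
  · have hrc := (inShiftedDiag_mk_iff.mp h).2.2.1
    exact hT.2.1 _ _ r (by dsimp only [unshiftBox]; omega)
      h.inCompDiag_unshiftBox h'.inCompDiag_unshiftBox
  · have hconn : Set.OrdConnected {r | InShiftedDiag l (c, r)} :=
      ⟨fun a ha b hb x hx => InShiftedDiag.of_row_le hl hb (ha.1.trans hx.1) hx.2⟩
    refine strictMonoOn_of_lt_add_one (f := fun r => T (unshiftBox (c, r))) hconn
      (fun a _ ha ha' => ?_) h h' hrr'
    obtain ⟨ha1, -, -, -⟩ := inShiftedDiag_mk_iff.mp ha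
    obtain ⟨-, hal, hac, -⟩ := inShiftedDiag_mk_iff.mp ha'
    have hlow : InCompDiag l (c - a + 1, a) := ha.inCompDiag_unshiftBox
    show T (c - a + 1, a) < T (c - (a + 1) + 1, a + 1)
    rw [show c - a + 1 = c - (a + 1) + 1 + 1 by omega] at hlow ⊢
    exact hT.lt_of_getD_lt (hl.getD_lt_getD_pred ha1 (by omega)) hlow ha'.inCompDiag_unshiftBox

theorem rect_bijection_general (n : ℕ) (l : List ℕ) (hl : IsStrictPartition l) :
    (∀ S, IsSShT l n S → IsSPYCT l n (rect S)) ∧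
    (∀ S S', IsSShT l n S → IsSShT l n S' →
      (∀ b, InCompDiag l b → rect S b = rect S' b) →
      (∀ b, InShiftedDiag l b → S b = S' b)) ∧
    (∀ T, IsSPYCT l n T → ∃ S, IsSShT l n S ∧ ∀ b, InCompDiag l b → rect S b = T b) := by
  refine ⟨fun S hS => hS.isSPYCT_rect hl, fun S S' _ _ hrect b hb => ?_,
    fun T hT => ⟨T ∘ unshiftBox, hT.1.isSShT_comp_unshiftBox hl, fun b hb => ?_⟩⟩
  · simpa only [rect_apply, shiftBox_unshiftBox hb.2.2.1] using hrect _ hb.inCompDiag_unshiftBox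
  · rw [rect_apply, Function.comp_apply, unshiftBox_shiftBox hb.2.2.1]

/-- rect is a bijection from standard shifted tableaux of shape λ to standard peak
Young composition tableaux of shape λ. -/
theorem rect_bijection (n : ℕ) (l : List ℕ) (hl : IsStrictPartition l) (hsum : l.sum = n) :
    (∀ S, IsSShT l n S → IsSPYCT l n (rect S)) ∧
    (∀ S S', IsSShT l n S → IsSShT l n S' →
      (∀ b, InCompDiag l b → rect S b = rect S' b) →
      (∀ b, InShiftedDiag l b → S b = S' b)) ∧
    (∀ T, IsSPYCT l n T → ∃ S, IsSShT l n S ∧ ∀ b, InCompDiag l b → rect S b = T b) :=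
  rect_bijection_general n l hl
end

section
/- Let α be a peak composition of n and T a standard peak composition tableau of shape α. Suppose i is an ascent of T (i.e., i+1 appears later than i in the bottom-to-top, left-to-right column reading word) and i+1 is not immediately to the right of i in the same row. Then the filling s_i T obtained by exchanging entries i and i+1 is also a standard peak composition tableau of shape α. -/
/-!
Exchanging `i` and `i + 1` only changes the relative order of these two entries, so rows and
the first column stay increasing as long as `i` and `i + 1` share neither a row nor the first
column, and the shapes cut out by the entries `≤ k` are unchanged for `k ≠ i`. The new shape at
level `i` is the old shape at level `i + 1` minus the box `b` of `i`, and `b` ends its row there: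
its right neighbour would have to hold `i + 1`, which lies in another row. Removing the last box
of a row keeps a peak composition unless the row is left with at most one box while rows remain
above it, i.e. unless `b` lies in column 1 or 2 below the top row. The peak condition at level
`i + 1` (column 1) resp. `i - 1` (column 2) rules this out.
-/

def RowIncreasing (α : List ℕ) (T : ℕ × ℕ → ℕ) : Prop :=
  ∀ c c' r, c < c' → InCompDiag α (c, r) → InCompDiag α (c', r) → T (c, r) < T (c', r)

def FirstColumnIncreasing (α : List ℕ) (T : ℕ × ℕ → ℕ) : Prop :=
  ∀ r r', r < r' → InCompDiag α (1, r) → InCompDiag α (1, r') → T (1, r) < T (1, r')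

def IsPrefixShape (α : List ℕ) (T : ℕ × ℕ → ℕ) (k : ℕ) (β : List ℕ) : Prop :=
  ∀ x, InCompDiag α x ∧ T x ≤ k ↔ InCompDiag β x

theorem isSPCT_iff {α : List ℕ} {n : ℕ} {T : ℕ × ℕ → ℕ} :
    IsSPCT α n T ↔ IsStdFilling (InCompDiag α) n T ∧ RowIncreasing α T ∧
      FirstColumnIncreasing α T ∧
      ∀ k, 1 ≤ k → k ≤ n → ∃ β, IsPeakComposition β ∧ IsPrefixShape α T k β :=
  Iff.rfl

namespace List

variable {α : Type*} {l : List α} {j k : ℕ} {a d : α}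

theorem getD_dropLast_of_lt (h : j < l.length - 1) : l.dropLast.getD j d = l.getD j d := by
  rw [getD_eq_getElem?_getD, getElem?_dropLast, if_pos h, getD_eq_getElem?_getD]

theorem getD_set_self (h : j < l.length) : (l.set j a).getD j d = a := by
  rw [getD_eq_getElem?_getD, getElem?_set_self h, Option.getD_some]

theorem getD_set_ne (h : j ≠ k) : (l.set j a).getD k d = l.getD k d := by
  rw [getD_eq_getElem?_getD, getElem?_set_ne h, getD_eq_getElem?_getD]

end List

section PeakComposition

variable {β : List ℕ}

theorem IsComposition.getD_pos (hβ : IsComposition β) {j : ℕ} (hj : j < β.length) :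
    0 < β.getD j 0 := by
  rw [List.getD_eq_getElem β 0 hj]
  exact hβ _ (List.getElem_mem hj)

theorem IsComposition.inCompDiag_one_of_le (hβ : IsComposition β) {c r r' : ℕ}
    (h : InCompDiag β (c, r')) (hr : 1 ≤ r) (hrr' : r ≤ r') : InCompDiag β (1, r) := by
  have hr' : r' ≤ β.length := h.2.1
  exact ⟨hr, by omega, le_rfl, hβ.getD_pos (by omega)⟩

theorem IsPeakComposition.dropLast (hβ : IsPeakComposition β) :
    IsPeakComposition β.dropLast := by
  refine ⟨fun x hx => hβ.1 x (List.mem_of_mem_dropLast hx), fun j hj => ?_⟩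
  rw [List.length_dropLast] at hj
  rw [List.getD_dropLast_of_lt (by omega)]
  exact hβ.2 j (by omega)

theorem IsPeakComposition.set (hβ : IsPeakComposition β) {j a : ℕ} (ha : 0 < a)
    (ha' : j + 1 < β.length → 1 < a) : IsPeakComposition (β.set j a) := by
  refine ⟨fun x hx => ?_, fun k hk => ?_⟩
  · rcases List.mem_or_eq_of_mem_set hx with hx | rfl
    exacts [hβ.1 x hx, ha]
  · rw [List.length_set] at hk
    by_cases hkj : j = k
    · subst hkj
      rw [List.getD_set_self (by omega)]
      exact ha' hk
    · rw [List.getD_set_ne hkj]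
      exact hβ.2 k hk

theorem inCompDiag_set_iff {c r : ℕ} (hr : 1 ≤ r) (hrβ : r ≤ β.length)
    (hrow : β.getD (r - 1) 0 = c) (x : ℕ × ℕ) :
    InCompDiag (β.set (r - 1) (c - 1)) x ↔ InCompDiag β x ∧ x ≠ (c, r) := by
  obtain ⟨x, y⟩ := x
  simp only [InCompDiag, List.length_set, ne_eq, Prod.mk.injEq]
  rcases Nat.eq_zero_or_pos y with rfl | hy
  · simp
  by_cases hyr : y = r
  · subst hyr
    rw [List.getD_set_self (by omega)]
    omega
  · rw [List.getD_set_ne (by omega)]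
    tauto

theorem inCompDiag_dropLast_iff (hβ : β.getD (β.length - 1) 0 = 1) (x : ℕ × ℕ) :
    InCompDiag β.dropLast x ↔ InCompDiag β x ∧ x ≠ (1, β.length) := by
  obtain ⟨x, y⟩ := x
  simp only [InCompDiag, List.length_dropLast, ne_eq, Prod.mk.injEq]
  constructor
  · rintro ⟨hy, hyβ, hx, hxβ⟩
    rw [List.getD_dropLast_of_lt (by omega)] at hxβ
    exact ⟨⟨hy, by omega, hx, hxβ⟩, by omega⟩
  · rintro ⟨⟨hy, hyβ, hx, hxβ⟩, hne⟩
    have hyβ' : y ≠ β.length := fun h => hne ⟨by subst h; omega, h⟩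
    rw [List.getD_dropLast_of_lt (by omega)]
    exact ⟨hy, by omega, hx, hxβ⟩

theorem IsPeakComposition.exists_diag_erase (hβ : IsPeakComposition β) {c r : ℕ}
    (hcr : InCompDiag β (c, r)) (hlast : ¬InCompDiag β (c + 1, r))
    (htop : c ≤ 2 → ¬InCompDiag β (1, r + 1)) :
    ∃ β', IsPeakComposition β' ∧ ∀ x, InCompDiag β x ∧ x ≠ (c, r) ↔ InCompDiag β' x := by
  obtain ⟨hr, hrβ, hc, hcβ⟩ : 1 ≤ r ∧ r ≤ β.length ∧ 1 ≤ c ∧ c ≤ β.getD (r - 1) 0 := hcr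
  have hrow : β.getD (r - 1) 0 = c := by
    by_contra h
    exact hlast ⟨hr, hrβ, by omega, show c + 1 ≤ β.getD (r - 1) 0 by omega⟩
  have hr_top : c ≤ 2 → r = β.length := fun h2 => by
    by_contra h
    have := hβ.1.getD_pos (j := r) (by omega)
    exact htop h2 ⟨by omega, by omega, le_rfl, by rwa [Nat.add_sub_cancel]⟩
  rcases Nat.lt_or_ge 1 c with hc1 | hc1
  · refine ⟨β.set (r - 1) (c - 1), hβ.set (by omega) fun h => ?_,
      fun x => (inCompDiag_set_iff hr hrβ hrow x).symm⟩
    by_contra h2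
    have := hr_top (by omega)
    omega
  · obtain rfl : r = β.length := hr_top (by omega)
    obtain rfl : c = 1 := by omega
    exact ⟨β.dropLast, hβ.dropLast, fun x => (inCompDiag_dropLast_iff hrow x).symm⟩

end PeakComposition

section SwapFill

variable {T : ℕ × ℕ → ℕ} {i : ℕ} {x y : ℕ × ℕ}

theorem swapFill_le_iff_of_ne {k : ℕ} (hk : k ≠ i) : swapFill T i x ≤ k ↔ T x ≤ k := by
  unfold swapFill
  split_ifs <;> omega

theorem swapFill_lt_swapFill (h : T x < T y) (hne : ¬(T x = i ∧ T y = i + 1)) :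
    swapFill T i x < swapFill T i y := by
  unfold swapFill
  split_ifs <;> omega

theorem apply_eq_of_swapFill_eq (h : swapFill T i x = swapFill T i y) : T x = T y := by
  unfold swapFill at h
  split_ifs at h <;> omega

theorem isStdFilling_swapFill {D : ℕ × ℕ → Prop} {n : ℕ} (hT : IsStdFilling D n T)
    (hi : 1 ≤ i) (hin : i + 1 ≤ n) : IsStdFilling D n (swapFill T i) := by
  obtain ⟨hbd, hsurj, hinj⟩ := hT
  refine ⟨fun x hx => ?_, fun k hk hkn => ?_,
    fun x y hx hy h => hinj x y hx hy (apply_eq_of_swapFill_eq h)⟩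
  · have := hbd x hx
    unfold swapFill
    split_ifs <;> omega
  · obtain ⟨x, hx, hTx⟩ := hsurj (if k = i then i + 1 else if k = i + 1 then i else k)
      (by split_ifs <;> omega) (by split_ifs <;> omega)
    refine ⟨x, hx, ?_⟩
    unfold swapFill
    split_ifs at hTx ⊢ <;> omega

theorem isPrefixShape_swapFill {α β β' : List ℕ} {b : ℕ × ℕ}
    (hinj : ∀ x y, InCompDiag α x → InCompDiag α y → T x = T y → x = y)
    (hb : InCompDiag α b) (hTb : T b = i) (hβ : IsPrefixShape α T (i + 1) β)
    (hβ' : ∀ x, InCompDiag β x ∧ x ≠ b ↔ InCompDiag β' x) :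
    IsPrefixShape α (swapFill T i) i β' := by
  intro x
  rw [← hβ' x, ← hβ x]
  by_cases hx : InCompDiag α x
  · have hxb : T x = i ↔ x = b :=
      ⟨fun h => hinj x b hx hb (h.trans hTb.symm), by rintro rfl; exact hTb⟩
    simp only [hx, true_and, ne_eq, ← hxb]
    unfold swapFill
    split_ifs <;> omega
  · simp [hx]

end SwapFill

section Tableau

variable {α : List ℕ} {n : ℕ} {T : ℕ × ℕ → ℕ}

theorem RowIncreasing.eq_succ_of_apply_eq_succ (hrow : RowIncreasing α T) {c c' r : ℕ}
    (h : InCompDiag α (c, r)) (h' : InCompDiag α (c', r)) (hT : T (c', r) = T (c, r) + 1) :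
    c' = c + 1 := by
  rcases lt_trichotomy c c' with hlt | rfl | hgt
  · by_contra hne
    have hc' : c' ≤ α.getD (r - 1) 0 := h'.2.2.2
    have hmid : InCompDiag α (c + 1, r) :=
      ⟨h'.1, h'.2.1, by omega, show c + 1 ≤ α.getD (r - 1) 0 by omega⟩
    have := hrow c (c + 1) r (by omega) h hmid
    have := hrow (c + 1) c' r (by omega) hmid h'
    omega
  · omega
  · have := hrow c' c r hgt h' h
    omega

theorem RowIncreasing.succ_lt_apply_right (hrow : RowIncreasing α T)
    (hinj : ∀ x y, InCompDiag α x → InCompDiag α y → T x = T y → x = y) {i c r c' r' : ℕ}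
    (hb : InCompDiag α (c, r)) (hb' : InCompDiag α (c', r')) (hTb : T (c, r) = i)
    (hTb' : T (c', r') = i + 1) (hrr : r ≠ r') (h : InCompDiag α (c + 1, r)) :
    i + 1 < T (c + 1, r) := by
  have := hrow c (c + 1) r (by omega) hb h
  by_contra hle
  exact hrr (congrArg Prod.snd (hinj _ _ h hb' (by omega)))

theorem PrefixesArePeak.second_le_of_first_le (hP : PrefixesArePeak α n T) {k r : ℕ}
    (hk : 1 ≤ k) (hkn : k ≤ n) (h : InCompDiag α (1, r)) (hT : T (1, r) ≤ k)
    (h' : InCompDiag α (1, r + 1)) (hT' : T (1, r + 1) ≤ k) :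
    InCompDiag α (2, r) ∧ T (2, r) ≤ k := by
  obtain ⟨β, hβ, hβT⟩ := hP k hk hkn
  have hr : 1 ≤ r := ((hβT _).1 ⟨h, hT⟩).1
  have hrβ : r + 1 ≤ β.length := ((hβT _).1 ⟨h', hT'⟩).2.1
  exact (hβT _).2 ⟨hr, by omega, by omega, hβ.2 (r - 1) (by omega)⟩

theorem succ_lt_apply_first_column_above (hstd : IsStdFilling (InCompDiag α) n T)
    (hrow : RowIncreasing α T) (hP : PrefixesArePeak α n T) {i c r c' r' : ℕ}
    (hb : InCompDiag α (c, r)) (hb' : InCompDiag α (c', r')) (hTb : T (c, r) = i)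
    (hTb' : T (c', r') = i + 1) (hrr : r ≠ r') (hcc : c ≤ c') (hc : c ≤ 2)
    (h : InCompDiag α (1, r + 1)) : i + 1 < T (1, r + 1) := by
  obtain ⟨hbd, -, hinj⟩ := hstd
  have hin : i + 1 ≤ n := hTb' ▸ (hbd _ hb').2
  by_contra hle
  have hc1 : 1 ≤ c := hb.2.2.1
  have hcα : c ≤ α.getD (r - 1) 0 := hb.2.2.2
  rcases (show c = 1 ∨ c = 2 by omega) with rfl | rfl
  · obtain ⟨h2, hT2⟩ :=
      hP.second_le_of_first_le (k := i + 1) (by omega) hin hb (by omega) h (by omega)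
    have : i + 1 < T (2, r) := hrow.succ_lt_apply_right hinj hb hb' hTb hTb' hrr h2
    omega
  · have h1 : InCompDiag α (1, r) :=
      ⟨hb.1, hb.2.1, le_rfl, show 1 ≤ α.getD (r - 1) 0 by omega⟩
    have hT1 : T (1, r) < i := hTb ▸ hrow 1 2 r one_lt_two h1 hb
    have hTi : T (1, r + 1) ≠ i := fun he => by
      simpa using hinj _ _ h hb (he.trans hTb.symm)
    have hTi' : T (1, r + 1) ≠ i + 1 := fun he => by
      have := congrArg Prod.fst (hinj _ _ h hb' (he.trans hTb'.symm))
      dsimp at this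
      omega
    obtain ⟨-, hT2⟩ := hP.second_le_of_first_le (k := i - 1)
      (by have := (hbd _ h1).1; omega) (by omega) h1 (by omega) h (by omega)
    omega

theorem isSPCT_swapFill {i : ℕ} {b b' : ℕ × ℕ} (hT : IsSPCT α n T) (hb : InCompDiag α b)
    (hb' : InCompDiag α b') (hTb : T b = i) (hTb' : T b' = i + 1) (hrow : b.2 ≠ b'.2)
    (hcol : ¬(b.1 = 1 ∧ b'.1 = 1))
    (hshape : ∃ β, IsPeakComposition β ∧ IsPrefixShape α (swapFill T i) i β) :
    IsSPCT α n (swapFill T i) := by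
  obtain ⟨hstd, hinc, hfirst, hP⟩ := isSPCT_iff.1 hT
  have hpair : ∀ x y, InCompDiag α x → InCompDiag α y → T x = i → T y = i + 1 →
      x = b ∧ y = b' := fun x y hx hy h h' =>
    ⟨hstd.2.2 x b hx hb (h.trans hTb.symm), hstd.2.2 y b' hy hb' (h'.trans hTb'.symm)⟩
  refine isSPCT_iff.2 ⟨isStdFilling_swapFill hstd (hTb ▸ (hstd.1 b hb).1)
    (hTb' ▸ (hstd.1 b' hb').2), fun c c' r hcc' hx hy => ?_, fun r r' hrr' hx hy => ?_,
    fun k hk hkn => ?_⟩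
  · refine swapFill_lt_swapFill (hinc c c' r hcc' hx hy) fun ⟨h, h'⟩ => ?_
    obtain ⟨rfl, rfl⟩ := hpair _ _ hx hy h h'
    exact hrow rfl
  · refine swapFill_lt_swapFill (hfirst r r' hrr' hx hy) fun ⟨h, h'⟩ => ?_
    obtain ⟨rfl, rfl⟩ := hpair _ _ hx hy h h'
    exact hcol ⟨rfl, rfl⟩
  · rcases eq_or_ne k i with rfl | hki
    · exact hshape
    · obtain ⟨β, hβ, hβT⟩ := hP k hk hkn
      exact ⟨β, hβ, fun x => by rw [swapFill_le_iff_of_ne hki]; exact hβT x⟩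

end Tableau

theorem spct_swap_ascent_general (n : ℕ) (α : List ℕ) (T : ℕ × ℕ → ℕ) (hT : IsSPCT α n T) (i : ℕ)
    (b b' : ℕ × ℕ) (hb : InCompDiag α b) (hb' : InCompDiag α b')
    (hTb : T b = i) (hTb' : T b' = i + 1)
    (hasc : b.1 < b'.1 ∨ (b.1 = b'.1 ∧ b.2 < b'.2))
    (hnotadj : ¬(b'.2 = b.2 ∧ b'.1 = b.1 + 1)) :
    IsSPCT α n (swapFill T i) := by
  obtain ⟨c, r⟩ := b
  obtain ⟨c', r'⟩ := b'
  dsimp only at hasc hnotadj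
  obtain ⟨hstd, hrow, -, hP⟩ := isSPCT_iff.1 hT
  have hrr : r ≠ r' := fun h => hnotadj
    ⟨h.symm, hrow.eq_succ_of_apply_eq_succ hb (h ▸ hb') (by rw [hTb, h, hTb'])⟩
  obtain ⟨β, hβ, hβT⟩ := hP (i + 1) (by have := (hstd.1 _ hb).1; omega)
    (hTb' ▸ (hstd.1 _ hb').2)
  have hlast : ¬InCompDiag β (c + 1, r) := fun h => by
    obtain ⟨hα, hle⟩ := (hβT _).2 h
    have := hrow.succ_lt_apply_right hstd.2.2 hb hb' hTb hTb' hrr hα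
    omega
  have htop : c ≤ 2 → ¬InCompDiag β (1, r + 1) := fun hc h => by
    obtain ⟨hα, hle⟩ := (hβT _).2 h
    have := succ_lt_apply_first_column_above hstd hrow hP hb hb' hTb hTb' hrr (by omega) hc hα
    omega
  have hcol : ¬(c = 1 ∧ c' = 1) := by
    rintro ⟨rfl, rfl⟩
    exact htop (by norm_num) (hβ.1.inCompDiag_one_of_le ((hβT _).1 ⟨hb', hTb'.le⟩) (by omega)
      (by omega))
  obtain ⟨β', hβ', hβ'T⟩ := hβ.exists_diag_erase ((hβT _).1 ⟨hb, by omega⟩) hlast htop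
  exact isSPCT_swapFill hT hb hb' hTb hTb' hrr hcol
    ⟨β', hβ', isPrefixShape_swapFill hstd.2.2 hb hTb hβT hβ'T⟩

/-- If i is a nonattacking ascent of a standard peak composition tableau (i+1 later in
the column reading word and not immediately right of i), then exchanging i and i+1
yields another standard peak composition tableau. -/
theorem spct_swap_ascent (n : ℕ) (α : List ℕ) (hα : IsPeakComposition α)
    (hsum : α.sum = n) (T : ℕ × ℕ → ℕ) (hT : IsSPCT α n T) (i : ℕ)
    (b b' : ℕ × ℕ) (hb : InCompDiag α b) (hb' : InCompDiag α b')
    (hTb : T b = i) (hTb' : T b' = i + 1)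
    (hasc : b.1 < b'.1 ∨ (b.1 = b'.1 ∧ b.2 < b'.2))
    (hnotadj : ¬(b'.2 = b.2 ∧ b'.1 = b.1 + 1)) :
    IsSPCT α n (swapFill T i) :=
  spct_swap_ascent_general n α T hT i b b' hb hb' hTb hTb' hasc hnotadj
end

section
/- Let α be a composition of n and T a standard Young composition tableau of shape α. If i and i+1 both lie in the same column c > 1 of T, then i lies in a strictly higher row than i+1. -/
/-!
If `i` sits at `(c+1, r)` and `i+1` at `(c+1, r')` with `r < r'`, look at the left neighbour
`(c, r')` of `i+1`. Row increase puts its entry below `i+1`, hence below `i`; but then the triple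
condition for `(c+1, r)` and `(c, r')` forces `i+1 < i`.
-/

theorem InCompDiag.of_le_left {α : List ℕ} {c c' r : ℕ} (h : InCompDiag α (c', r))
    (hc : 1 ≤ c) (hcc' : c ≤ c') : InCompDiag α (c, r) := by
  obtain ⟨h1, h2, -, h4⟩ := h
  exact ⟨h1, h2, hc, hcc'.trans h4⟩

theorem IsSYCT.left_neighbor_between {α : List ℕ} {n : ℕ} {T : ℕ × ℕ → ℕ}
    (hT : IsSYCT α n T) {c r r' : ℕ} (hc : 1 ≤ c) (hr : r < r')
    (hb : InCompDiag α (c + 1, r)) (hb' : InCompDiag α (c + 1, r'))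
    (hlt : T (c + 1, r) < T (c + 1, r')) :
    T (c + 1, r) < T (c, r') ∧ T (c, r') < T (c + 1, r') := by
  obtain ⟨⟨-, -, hinj⟩, hrow, -, htriple⟩ := hT
  have hleft : InCompDiag α (c, r') := hb'.of_le_left hc (Nat.le_succ c)
  have hne : T (c + 1, r) ≠ T (c, r') := fun h => by
    simpa using hinj _ _ hb hleft h
  refine ⟨lt_of_le_of_ne ?_ hne, hrow c (c + 1) r' (Nat.lt_succ_self c) hleft hb'⟩
  by_contra! hgt
  exact absurd (htriple c r' r hr hleft hb hgt).2 (not_lt.mpr hlt.le)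

theorem syct_consecutive_same_column_general (n : ℕ) (α : List ℕ)
    (T : ℕ × ℕ → ℕ) (hT : IsSYCT α n T) (i : ℕ)
    (b b' : ℕ × ℕ) (hb : InCompDiag α b) (hb' : InCompDiag α b')
    (hTb : T b = i) (hTb' : T b' = i + 1)
    (hcol : b.1 = b'.1) (hc : 1 < b.1) :
    b'.2 < b.2 := by
  obtain ⟨c', r⟩ := b
  obtain ⟨_, r'⟩ := b'
  obtain ⟨c, rfl⟩ : ∃ c, c' = c + 1 := ⟨c' - 1, by omega⟩
  dsimp only at hcol hc ⊢
  subst hcol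
  by_contra! hle
  have hr : r < r' := lt_of_le_of_ne hle fun h => by subst h; omega
  obtain ⟨hbelow, habove⟩ := hT.left_neighbor_between (by omega) hr hb hb' (by omega)
  omega

/-- If i and i+1 lie in the same column c > 1 of a standard Young composition tableau,
then i lies in a strictly higher row than i+1. -/
theorem syct_consecutive_same_column (n : ℕ) (α : List ℕ) (hα : IsComposition α)
    (hsum : α.sum = n) (T : ℕ × ℕ → ℕ) (hT : IsSYCT α n T) (i : ℕ)
    (b b' : ℕ × ℕ) (hb : InCompDiag α b) (hb' : InCompDiag α b')
    (hTb : T b = i) (hTb' : T b' = i + 1)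
    (hcol : b.1 = b'.1) (hc : 1 < b.1) :
    b'.2 < b.2 :=
  syct_consecutive_same_column_general n α T hT i b b' hb hb' hTb hTb' hcol hc
end

section
/- Let α be a composition of n and T a standard Young composition tableau of shape α. If i is an ascent of T (i+1 lies in a column strictly right of i) and i+1 is not immediately right of i in the same row, then exchanging the entries i and i+1 yields another standard Young composition tableau of shape α. -/
/-!
Exchanging `i` and `i + 1` applies the transposition `(i i+1)` to all entries, which preserves every
strict comparison except `i < i + 1`. So the only conditions that could fail are those comparing the
box `b` of `i` with the box `b'` of `i + 1`. As `b` lies strictly left of `b'`, they share no column;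
they share no row either, since consecutive entries of a row sit in adjacent boxes. In the triple
condition, the hypothesis read in the new tableau would need `b'` in column `c` and `b` in column
`c + 1`, which is impossible, and its conclusion compares two boxes of one column.
-/

open Equiv

lemma swapFill_eq_swap_comp (T : ℕ × ℕ → ℕ) (i : ℕ) : swapFill T i = swap i (i + 1) ∘ T :=
  rfl

lemma swap_succ_lt_swap_succ {i a c : ℕ} (h : a < c) (hne : ¬(a = i ∧ c = i + 1)) :
    swap i (i + 1) a < swap i (i + 1) c := by
  simp only [swap_apply_def]
  split_ifs <;> omega

lemma lt_of_swap_succ_lt_swap_succ {i a c : ℕ} (h : swap i (i + 1) a < swap i (i + 1) c)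
    (hne : ¬(a = i + 1 ∧ c = i)) : a < c := by
  simp only [swap_apply_def] at h
  split_ifs at h <;> omega

lemma swap_succ_mem_range_iff {i n : ℕ} (hi : 1 ≤ i) (hin : i + 1 ≤ n) (k : ℕ) :
    (1 ≤ swap i (i + 1) k ∧ swap i (i + 1) k ≤ n) ↔ (1 ≤ k ∧ k ≤ n) := by
  simp only [swap_apply_def]
  split_ifs <;> omega

lemma IsStdFilling.perm_comp {D : ℕ × ℕ → Prop} {n : ℕ} {T : ℕ × ℕ → ℕ}
    (hT : IsStdFilling D n T) {σ : Perm ℕ} (hσ : ∀ k, (1 ≤ σ k ∧ σ k ≤ n) ↔ (1 ≤ k ∧ k ≤ n)) :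
    IsStdFilling D n (σ ∘ T) := by
  obtain ⟨hbound, hsurj, hinj⟩ := hT
  refine ⟨fun x hx => (hσ (T x)).2 (hbound x hx), fun k hk1 hkn => ?_,
    fun x y hx hy h => hinj x y hx hy (σ.injective h)⟩
  have hk : 1 ≤ σ.symm k ∧ σ.symm k ≤ n := (hσ _).1 (by simpa using And.intro hk1 hkn)
  obtain ⟨x, hx, hTx⟩ := hsurj _ hk.1 hk.2
  exact ⟨x, hx, by simp [hTx]⟩

lemma IsSYCT.col_eq_succ_of_row_eq {α : List ℕ} {n : ℕ} {T : ℕ × ℕ → ℕ} (hT : IsSYCT α n T)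
    {b b' : ℕ × ℕ} (hb : InCompDiag α b) (hb' : InCompDiag α b') (hrow : b.2 = b'.2)
    (hcol : b.1 < b'.1) (hsucc : T b' = T b + 1) : b'.1 = b.1 + 1 := by
  obtain ⟨c, r⟩ := b
  obtain ⟨c', r'⟩ := b'
  obtain rfl : r = r' := hrow
  by_contra hne
  have hlen : c' ≤ α.getD (r - 1) 0 := hb'.2.2.2
  have hm : InCompDiag α (c + 1, r) :=
    ⟨hb.1, hb.2.1, by omega, show c + 1 ≤ α.getD (r - 1) 0 by omega⟩
  have h1 := hT.2.1 c (c + 1) r (by omega) hb hm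
  have h2 := hT.2.1 (c + 1) c' r (by omega) hm hb'
  omega

theorem syct_swap_ascent_general (n : ℕ) (α : List ℕ) (T : ℕ × ℕ → ℕ) (hT : IsSYCT α n T) (i : ℕ)
    (b b' : ℕ × ℕ) (hb : InCompDiag α b) (hb' : InCompDiag α b')
    (hTb : T b = i) (hTb' : T b' = i + 1)
    (hasc : b.1 < b'.1)
    (hnotadj : ¬(b'.2 = b.2 ∧ b'.1 = b.1 + 1)) :
    IsSYCT α n (swapFill T i) := by
  have hbox : ∀ x, InCompDiag α x → T x = i → x = b := fun x hx h =>
    hT.1.2.2 x b hx hb (h.trans hTb.symm)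
  have hbox' : ∀ x, InCompDiag α x → T x = i + 1 → x = b' := fun x hx h =>
    hT.1.2.2 x b' hx hb' (h.trans hTb'.symm)
  have hrow : b.2 ≠ b'.2 := fun h =>
    hnotadj ⟨h.symm, hT.col_eq_succ_of_row_eq hb hb' h hasc (by omega)⟩
  have hi : 1 ≤ i := hTb ▸ (hT.1.1 b hb).1
  have hin : i + 1 ≤ n := hTb' ▸ (hT.1.1 b' hb').2
  rw [swapFill_eq_swap_comp]
  refine ⟨hT.1.perm_comp (swap_succ_mem_range_iff hi hin), ?_, ?_, ?_⟩
  · intro c c' r hcc hx hy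
    refine swap_succ_lt_swap_succ (hT.2.1 c c' r hcc hx hy) fun ⟨h, h'⟩ => hrow ?_
    rw [← hbox _ hx h, ← hbox' _ hy h']
  · intro r r' hrr hx hy
    refine swap_succ_lt_swap_succ (hT.2.2.1 r r' hrr hx hy) fun ⟨h, h'⟩ => hasc.ne ?_
    rw [← hbox _ hx h, ← hbox' _ hy h']
  · intro c r r' hrr hx hy hlt
    have hold := lt_of_swap_succ_lt_swap_succ hlt fun ⟨h', h⟩ => by
      have hc : c + 1 = b.1 := congrArg Prod.fst (hbox _ hy h)
      have hc' : c = b'.1 := congrArg Prod.fst (hbox' _ hx h')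
      omega
    obtain ⟨hmem, hlt'⟩ := hT.2.2.2 c r r' hrr hx hy hold
    refine ⟨hmem, swap_succ_lt_swap_succ hlt' fun ⟨h, h'⟩ => hasc.ne ?_⟩
    rw [← hbox _ hmem h, ← hbox' _ hy h']

/-- If i is an ascent of a standard Young composition tableau (i+1 strictly right of i)
and i+1 is not immediately right of i in the same row, then exchanging i and i+1 yields
another standard Young composition tableau. -/
theorem syct_swap_ascent (n : ℕ) (α : List ℕ) (hα : IsComposition α)
    (hsum : α.sum = n) (T : ℕ × ℕ → ℕ) (hT : IsSYCT α n T) (i : ℕ)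
    (b b' : ℕ × ℕ) (hb : InCompDiag α b) (hb' : InCompDiag α b')
    (hTb : T b = i) (hTb' : T b' = i + 1)
    (hasc : b.1 < b'.1)
    (hnotadj : ¬(b'.2 = b.2 ∧ b'.1 = b.1 + 1)) :
    IsSYCT α n (swapFill T i) :=
  syct_swap_ascent_general n α T hT i b b' hb hb' hTb hTb' hasc hnotadj
end

section
/- Let α be a peak composition of n and T a standard peak Young composition tableau of shape α. Let j be the smallest entry of T not in row 1. Then j is in the leftmost box of row 2, j - 1 ≥ 2, j - 1 is a descent of T, j is not a descent of T, and j - 1 is the smallest element of Peak(Des(T)). -/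
/-! Below the smallest entry `j` off row 1, the entries `1, …, j - 1` fill row 1 from the left, so
`j` must start row 2 and `j - 1` (at `(j - 1, 1)`) is a descent. The peak condition, applied to the
prefix of entries `≤ j`, forces `(2, 1)` to hold an entry below `j`, whence `j ≥ 3`. If `j + 1`
were in the first column, it would lie in row `≥ 3`, and the peak condition for the prefix
`≤ j + 1` would demand an entry at `(2, 2)` strictly between `j` and `j + 1`; so `j` is no
descent.
All other `i < j - 1` are ascents inside row 1. -/

theorem InCompDiag.of_col_le {α : List ℕ} {c r c' : ℕ} (h : InCompDiag α (c, r)) (hc' : 1 ≤ c')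
    (hle : c' ≤ c) : InCompDiag α (c', r) :=
  ⟨h.1, h.2.1, hc', hle.trans h.2.2.2⟩

theorem IsPeakComposition.inCompDiag_two_of_lt {β : List ℕ} (hβ : IsPeakComposition β)
    {p : ℕ × ℕ} (hp : InCompDiag β p) {r : ℕ} (hr : 1 ≤ r) (hrp : r < p.2) :
    InCompDiag β (2, r) := by
  obtain ⟨-, hplen, -, -⟩ := hp
  have hlong : 1 < β.getD (r - 1) 0 := hβ.2 (r - 1) (by omega)
  exact ⟨hr, by omega, one_le_two, hlong⟩

theorem PrefixesArePeak.inCompDiag_two_of_lt {α : List ℕ} {n : ℕ} {T : ℕ × ℕ → ℕ}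
    (hpk : PrefixesArePeak α n T) (hfill : IsStdFilling (InCompDiag α) n T) {p : ℕ × ℕ}
    (hp : InCompDiag α p) {r : ℕ} (hr : 1 ≤ r) (hrp : r < p.2) :
    InCompDiag α (2, r) ∧ T (2, r) ≤ T p := by
  obtain ⟨hTp1, hTpn⟩ := hfill.1 p hp
  obtain ⟨β, hβ, hβα⟩ := hpk (T p) hTp1 hTpn
  exact (hβα (2, r)).2 (hβ.inCompDiag_two_of_lt ((hβα p).1 ⟨hp, le_rfl⟩) hr hrp)

theorem isDes_iff_of_eq {α : List ℕ} {T : ℕ × ℕ → ℕ}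
    (hinj : ∀ b b', InCompDiag α b → InCompDiag α b' → T b = T b' → b = b')
    {p q : ℕ × ℕ} {i : ℕ} (hp : InCompDiag α p) (hq : InCompDiag α q) (hTp : T p = i)
    (hTq : T q = i + 1) : IsDes α T i ↔ q.1 ≤ p.1 := by
  constructor
  · rintro ⟨p', q', hp', hq', hTp', hTq', hle⟩
    rwa [hinj p' p hp' hp (hTp'.trans hTp.symm), hinj q' q hq' hq (hTq'.trans hTq.symm)] at hle
  · exact fun hle => ⟨p, q, hp, hq, hTp, hTq, hle⟩

namespace IsSYCT

variable {α : List ℕ} {n : ℕ} {T : ℕ × ℕ → ℕ}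

theorem col_le (hT : IsSYCT α n T) {c r : ℕ} (h : InCompDiag α (c, r)) : c ≤ T (c, r) := by
  induction c with
  | zero => exact Nat.zero_le _
  | succ c ih =>
    by_cases hc : c = 0
    · subst hc
      exact (hT.1.1 _ h).1
    · have hprev : InCompDiag α (c, r) := h.of_col_le (Nat.one_le_iff_ne_zero.2 hc) c.le_succ
      have := hT.2.1 c (c + 1) r c.lt_succ_self hprev h
      have := ih hprev
      omega

theorem row_one_eq_of_lt (hT : IsSYCT α n T) {j : ℕ} (hjn : j ≤ n)
    (hmin : ∀ b', InCompDiag α b' → T b' < j → b'.2 = 1) {m : ℕ} (hm : 1 ≤ m) (hmj : m < j) :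
    InCompDiag α (m, 1) ∧ T (m, 1) = m := by
  induction m using Nat.strong_induction_on with
  | _ m ih =>
    obtain ⟨⟨c, r⟩, hcr, hTcr⟩ := hT.1.2.1 m hm (by omega)
    obtain rfl : r = 1 := hmin _ hcr (by simp only [hTcr, hmj])
    have hcm : c ≤ m := hTcr ▸ hT.col_le hcr
    obtain rfl | hlt := hcm.eq_or_lt
    · exact ⟨hcr, hTcr⟩
    · have := (ih c hlt hcr.2.2.1 (by omega)).2
      omega

theorem eq_one_two_of_min_off_row_one (hT : IsSYCT α n T) (hα : IsPeakComposition α)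
    {b : ℕ × ℕ} (hb : InCompDiag α b) (hrow : b.2 ≠ 1)
    (hmin : ∀ b', InCompDiag α b' → T b' < T b → b'.2 = 1) : b = (1, 2) := by
  obtain ⟨c, r⟩ := b
  obtain ⟨hr1, -, hc1, -⟩ := id hb
  dsimp only at hrow hr1 hc1
  have hc : c = 1 := by
    by_contra hc
    have h1r : InCompDiag α (1, r) := hb.of_col_le le_rfl hc1
    exact hrow (hmin _ h1r (hT.2.1 1 c r (by omega) h1r hb))
  subst hc
  have hr : r = 2 := by
    by_contra hr
    have h12 : InCompDiag α (1, 2) :=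
      (hα.inCompDiag_two_of_lt hb one_le_two (by dsimp only; omega)).of_col_le le_rfl one_le_two
    exact absurd (hmin _ h12 (hT.2.2.1 2 r (by omega) h12 hb)) (by decide)
  rw [hr]

end IsSYCT

theorem IsSPYCT.not_isDes_one_two {α : List ℕ} {n : ℕ} {T : ℕ × ℕ → ℕ} (hT : IsSPYCT α n T)
    (h12 : InCompDiag α (1, 2)) : ¬IsDes α T (T (1, 2)) := by
  obtain ⟨⟨hfill, hrowinc, hcolinc, -⟩, hpk⟩ := hT
  rintro ⟨p, ⟨c, r⟩, hp, hq, hTp, hTq, hle⟩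
  rw [hfill.2.2 p (1, 2) hp h12 hTp] at hle
  obtain rfl : c = 1 := by have := hq.2.2.1; simp only at hle this; omega
  have hr1 := hq.1
  rcases (by omega : r = 1 ∨ r = 2 ∨ 2 < r) with rfl | rfl | hr
  · have := hcolinc 1 2 one_lt_two hq h12
    omega
  · omega
  · obtain ⟨h22, hT22⟩ := hpk.inCompDiag_two_of_lt hfill hq one_le_two hr
    have := hrowinc 1 2 2 one_lt_two h12 h22
    have := congrArg Prod.fst (hfill.2.2 _ _ h22 hq (by omega))
    simp at this

theorem spyct_smallest_peak_general (n : ℕ) (α : List ℕ) (hα : IsPeakComposition α)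
    (T : ℕ × ℕ → ℕ) (hT : IsSPYCT α n T) (j : ℕ) (b : ℕ × ℕ)
    (hb : InCompDiag α b) (hTb : T b = j) (hrow : b.2 ≠ 1)
    (hmin : ∀ b', InCompDiag α b' → T b' < j → b'.2 = 1) :
    b = (1, 2) ∧ 2 ≤ j - 1 ∧ IsDes α T (j - 1) ∧ ¬ IsDes α T j ∧
      (1 < j - 1 ∧ ¬ IsDes α T (j - 1 - 1)) ∧
      (∀ i, i < j - 1 → ¬(IsDes α T i ∧ 1 < i ∧ ¬ IsDes α T (i - 1))) := by
  have hinj := hT.1.1.2.2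
  have hjn : j ≤ n := hTb ▸ (hT.1.1.1 b hb).2
  have hrow1 : ∀ m, 1 ≤ m → m < j → InCompDiag α (m, 1) ∧ T (m, 1) = m :=
    fun _ => hT.1.row_one_eq_of_lt hjn hmin
  obtain rfl : b = (1, 2) := hT.1.eq_one_two_of_min_off_row_one hα hb hrow (hTb ▸ hmin)
  have hj : 3 ≤ j := by
    obtain ⟨h21, hT21⟩ := hT.2.inCompDiag_two_of_lt hT.1.1 hb le_rfl one_lt_two
    have h2 := hT.1.col_le h21
    have hne : T (2, 1) ≠ j := fun h => by simpa using hinj _ _ h21 hb (h.trans hTb.symm)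
    omega
  have hasc : ∀ i, 1 ≤ i → i + 1 < j → ¬IsDes α T i := fun i hi hij => by
    obtain ⟨hd, hTd⟩ := hrow1 i hi (by omega)
    obtain ⟨hd', hTd'⟩ := hrow1 (i + 1) (by omega) hij
    rw [isDes_iff_of_eq hinj hd hd' hTd hTd']
    omega
  refine ⟨rfl, by omega, ?_, hTb ▸ hT.not_isDes_one_two hb,
    ⟨by omega, hasc _ (by omega) (by omega)⟩,
    fun i hi ⟨hdes, hi1, _⟩ => hasc i (by omega) (by omega) hdes⟩
  obtain ⟨hd, hTd⟩ := hrow1 (j - 1) (by omega) (by omega)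
  exact (isDes_iff_of_eq hinj hd hb hTd (by omega)).2 (by simp only; omega)

/-- For a standard peak Young composition tableau T, if j is the smallest entry not in
row 1, then j is in the leftmost box of row 2, j-1 ≥ 2, j-1 is a descent, j is not a
descent, and j-1 is the smallest element of Peak(Des(T)). -/
theorem spyct_smallest_peak (n : ℕ) (α : List ℕ) (hα : IsPeakComposition α)
    (hsum : α.sum = n) (hlen : 2 ≤ α.length)
    (T : ℕ × ℕ → ℕ) (hT : IsSPYCT α n T) (j : ℕ) (b : ℕ × ℕ)
    (hb : InCompDiag α b) (hTb : T b = j) (hrow : b.2 ≠ 1)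
    (hmin : ∀ b', InCompDiag α b' → T b' < j → b'.2 = 1) :
    b = (1, 2) ∧ 2 ≤ j - 1 ∧ IsDes α T (j - 1) ∧ ¬ IsDes α T j ∧
      (1 < j - 1 ∧ ¬ IsDes α T (j - 1 - 1)) ∧
      (∀ i, i < j - 1 → ¬(IsDes α T i ∧ 1 < i ∧ ¬ IsDes α T (i - 1))) :=
  spyct_smallest_peak_general n α hα T hT j b hb hTb hrow hmin
end
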